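/- Let 𝒢 = (G⁰, 𝒢¹, r, s) be an ultragraph and ℋ ⊆ 𝒢⁰ a hereditary subset. Define ℋ₀ := ℋ and inductively ℋ_{n+1} := {A ∪ F : A ∈ ℋₙ and F is a finite subset of Sₙ}, where Sₙ := {w ∈ G⁰ : 0 < |s^{-1}(w)| < ∞ and r(e) ∈ ℋₙ for all e with s(e) = w}. Then the smallest saturated hereditary subset of 𝒢⁰ containing ℋ equals ⋃_{i≥0} ℋ_i, and every element X of this closure has the form X = A ∪ F with A ∈ ℋ and F a finite subset of ⋃_{i≥1} S_i. -/
import Mathlib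


set_option maxHeartbeats 1000000
set_option synthInstance.maxHeartbeats 400000

open scoped BigOperators

/-- An ultragraph: countable sets of vertices and edges, a source map, and a
range map taking values in nonempty subsets of vertices. -/
structure Ultragraph where
  V : Type
  E : Type
  countableV : Countable V
  countableE : Countable E
  src : E → V
  rng : E → Set V
  rng_nonempty : ∀ e, (rng e).Nonempty

namespace Ultragraph

variable (G : Ultragraph)

/-- Membership in `𝒢⁰`: the smallest collection of subsets of vertices containing
all singletons and all edge ranges, and closed under finite unions and finite
intersections (in particular it contains the empty set, the empty union). -/
inductive Mem0 : Set G.V → Prop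
  | empty : Mem0 ∅
  | singleton (v : G.V) : Mem0 {v}
  | range (e : G.E) : Mem0 (G.rng e)
  | union {A B : Set G.V} : Mem0 A → Mem0 B → Mem0 (A ∪ B)
  | inter {A B : Set G.V} : Mem0 A → Mem0 B → Mem0 (A ∩ B)

/-- The collection `𝒢⁰`. -/
def G0 : Set (Set G.V) := {A | G.Mem0 A}

/-- The set of edges emitted by a vertex. -/
def emitted (v : G.V) : Set G.E := {e | G.src e = v}

/-- A regular vertex emits at least one and finitely many edges. -/
def IsRegular (v : G.V) : Prop := (G.emitted v).Nonempty ∧ (G.emitted v).Finite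

/-- A sink emits no edges. -/
def IsSink (v : G.V) : Prop := G.emitted v = ∅

/-- A singular vertex is a sink or an infinite emitter. -/
def IsSingular (v : G.V) : Prop := G.IsSink v ∨ (G.emitted v).Infinite

/-- A (finite, positive length) path is a list of edges `e₁ ⋯ eₙ` with
`s(e_{i+1}) ∈ r(e_i)`. -/
def IsPathList (l : List G.E) : Prop := l.Chain' (fun e f => G.src f ∈ G.rng e)

/-- A cycle is a nonempty path `e₁ ⋯ eₙ` with `s(e₁) ∈ r(eₙ)`. -/
def IsCycle (l : List G.E) : Prop :=
  ∃ h : l ≠ [], G.IsPathList l ∧ G.src (l.head h) ∈ G.rng (l.getLast h)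

/-- An ultragraph is acyclic if it has no cycles. -/
def Acyclic : Prop := ∀ l : List G.E, ¬ G.IsCycle l

/-- An exit for a cycle `e₁ ⋯ eₙ`: either an edge `f` with `s(f) ∈ r(e_i)` and
`f ≠ e_{i+1}` (indices mod `n`), or a sink `w ∈ r(e_i)` for some `i`. -/
def HasExit (l : List G.E) : Prop :=
  ∃ i : Fin l.length,
    (∃ f : G.E, G.src f ∈ G.rng (l.get i) ∧
        f ≠ l.get ⟨((i : ℕ) + 1) % l.length, Nat.mod_lt _ i.pos⟩) ∨
    (∃ w ∈ G.rng (l.get i), G.IsSink w)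

/-- The ranges of finite paths starting at `v` (including the length-zero
path `{v}`). -/
def pathRangesFrom (v : G.V) : Set (Set G.V) :=
  {A | A = {v} ∨ ∃ (l : List G.E) (h : l ≠ []),
    G.IsPathList l ∧ G.src (l.head h) = v ∧ A = G.rng (l.getLast h)}

/-- `w ≥ v`: there is a path from `w` whose range contains `v`. -/
def Geq (w v : G.V) : Prop := ∃ A ∈ G.pathRangesFrom w, v ∈ A

/-- `v → A`: finitely many paths starting at `v` whose ranges cover `A`. -/
def ConnectsSet (v : G.V) (A : Set G.V) : Prop :=
  ∃ (n : ℕ) (B : Fin n → Set G.V),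
    (∀ i, B i ∈ G.pathRangesFrom v) ∧ A ⊆ ⋃ i, B i

/-- An infinite path. -/
def IsInfinitePath (α : ℕ → G.E) : Prop := ∀ i, G.src (α (i + 1)) ∈ G.rng (α i)

/-- Condition (1): every vertex connects to every infinite path. -/
def CondInfPaths : Prop :=
  ∀ α : ℕ → G.E, G.IsInfinitePath α → ∀ v : G.V, ∃ i, G.Geq v (G.src (α i))

/-- Condition (2): `G⁰ ≥ {v}` for every singular vertex `v`. -/
def CondSingular : Prop :=
  ∀ v : G.V, G.IsSingular v → ∀ w : G.V, G.Geq w v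

/-- Condition (3): for every edge with infinite range and every vertex `w`
there is a cofinite subset of the range covered by paths from `w`. -/
def CondInfRange : Prop :=
  ∀ e : G.E, (G.rng e).Infinite → ∀ w : G.V,
    ∃ A ⊆ G.rng e, (G.rng e \ A).Finite ∧ G.ConnectsSet w A

/-- A hereditary collection `ℋ ⊆ 𝒢⁰`. -/
def Hereditary (H : Set (Set G.V)) : Prop :=
  (∀ A ∈ H, G.Mem0 A) ∧
  (∀ e : G.E, {G.src e} ∈ H → G.rng e ∈ H) ∧
  (∀ A ∈ H, ∀ B ∈ H, A ∪ B ∈ H) ∧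
  (∀ A ∈ H, ∀ B : Set G.V, G.Mem0 B → B ⊆ A → B ∈ H)

/-- A saturated collection. -/
def Saturated (H : Set (Set G.V)) : Prop :=
  ∀ v : G.V, G.IsRegular v → (∀ e : G.E, G.src e = v → G.rng e ∈ H) → {v} ∈ H

/-- The only saturated hereditary collections are the trivial ones:
(at most) `{∅}` and all of `𝒢⁰`. -/
def OnlyTrivialSatHer : Prop :=
  ∀ H : Set (Set G.V), G.Hereditary H → G.Saturated H → H ⊆ {∅} ∨ H = G.G0

/-- The smallest saturated hereditary collection containing `H`. -/
def satHerClosure (H : Set (Set G.V)) : Set (Set G.V) :=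
  ⋂₀ {H' : Set (Set G.V) | G.Hereditary H' ∧ G.Saturated H' ∧ H ⊆ H'}

/-- `Sₙ`-operation: regular vertices all of whose emitted edge ranges lie in `X`. -/
def Sset (X : Set (Set G.V)) : Set G.V :=
  {w | G.IsRegular w ∧ ∀ e : G.E, G.src e = w → G.rng e ∈ X}

/-- The chain `ℋ₀ := ℋ`, `ℋ_{n+1} := {A ∪ F : A ∈ ℋₙ, F finite ⊆ Sₙ}`. -/
def hchain (H : Set (Set G.V)) : ℕ → Set (Set G.V)
  | 0 => H
  | n + 1 => {B | ∃ A ∈ hchain H n, ∃ F : Finset G.V,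
      (F : Set G.V) ⊆ G.Sset (hchain H n) ∧ B = A ∪ (F : Set G.V)}

/-- A vertex connects to a cycle. -/
def ConnectsToCycle (v : G.V) : Prop :=
  ∃ l : List G.E, G.IsCycle l ∧ ∃ e ∈ l, G.Geq v (G.src e)

/-- A path ends at the vertex `v` (the empty list stands for the length-zero
path `{v}`). -/
def EndsAt (l : List G.E) (v : G.V) : Prop :=
  G.IsPathList l ∧ ∀ h : l ≠ [], G.rng (l.getLast h) = {v}

/-- `c⁰`: the subsets (in `𝒢⁰`) of the set of sources of the edges of `c`. -/
def cZero (c : List G.E) : Set (Set G.V) :=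
  {A | G.Mem0 A ∧ A ⊆ {w | ∃ e ∈ c, G.src e = w}}

end Ultragraph

section RingDefs

variable (R : Type) [NonUnitalRing R]

/-- A ring has local units if every finite subset lies in a corner `eRe`. -/
def HasLocalUnits : Prop :=
  ∀ S : Finset R, ∃ e : R, e * e = e ∧ ∀ x ∈ S, e * x = x ∧ x * e = x

/-- `R` is a division ring: it has an identity and nonzero elements are invertible. -/
def IsDivisionRingLike : Prop :=
  ∃ u : R, (∀ x : R, u * x = x ∧ x * u = x) ∧ u ≠ 0 ∧
    ∀ x : R, x ≠ 0 → ∃ y : R, x * y = u ∧ y * x = u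

/-- An infinite idempotent: `eR` is isomorphic to a proper direct summand of
itself; algebraically, `e = f + g` with `f, g` orthogonal idempotents, `g ≠ 0`,
and `eR ≅ fR` (witnessed by `a, b` with `ab = e`, `ba = f`). -/
def IsInfiniteIdem (e : R) : Prop :=
  e * e = e ∧ ∃ f g : R, f * f = f ∧ g * g = g ∧ f * g = 0 ∧ g * f = 0 ∧
    f + g = e ∧ g ≠ 0 ∧ ∃ a b : R, a * b = e ∧ b * a = f

/-- `R` is purely infinite: every nonzero right ideal contains an infinite
idempotent. -/
def PurelyInfinite : Prop :=
  ∀ I : AddSubgroup R, (∀ x ∈ I, ∀ r : R, x * r ∈ I) → I ≠ ⊥ →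
    ∃ e ∈ I, IsInfiniteIdem R e

/-- A simple ring: nonzero multiplication and no nontrivial two-sided ideals. -/
def RingIsSimple : Prop :=
  (∃ a b : R, a * b ≠ 0) ∧
    ∀ I : AddSubgroup R, (∀ x ∈ I, ∀ r : R, x * r ∈ I ∧ r * x ∈ I) →
      I = ⊥ ∨ I = ⊤

/-- Purely infinite simple ring. -/
def PurelyInfiniteSimple : Prop := RingIsSimple R ∧ PurelyInfinite R

/-- von Neumann regularity. -/
def IsVonNeumannRegularRing : Prop := ∀ a : R, ∃ b : R, a = a * b * a

end RingDefs

section AlgDefs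

variable (K : Type) [Field K]

/-- A matricial `K`-algebra: isomorphic (as a `K`-algebra) to a finite direct
sum of full finite-dimensional matrix algebras over `K`. -/
def IsMatricialAlgebra (B : Type) [NonUnitalRing B] [Module K B] : Prop :=
  ∃ (n : ℕ) (d : Fin n → ℕ)
    (e : B ≃+* (∀ i : Fin n, Matrix (Fin (d i)) (Fin (d i)) K)),
    ∀ (k : K) (x : B), e (k • x) = k • e x

/-- A locally matricial `K`-algebra: a directed union of matricial subalgebras. -/
def IsLocallyMatricial (A : Type) [NonUnitalRing A] [Module K A] : Prop :=
  ∃ (ι : Type) (B : ι → NonUnitalSubalgebra K A),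
    (∀ i j, ∃ k, B i ≤ B k ∧ B j ≤ B k) ∧
    (∀ x : A, ∃ i, x ∈ B i) ∧
    ∀ i, IsMatricialAlgebra K (B i)

/-- `I` is the two-sided ideal of the non-unital `K`-algebra `A` generated by
the set `s`. -/
def IsIdealGeneratedBy (A : Type) [NonUnitalRing A] [Module K A]
    (I : NonUnitalSubalgebra K A) (s : Set A) : Prop :=
  s ⊆ (I : Set A) ∧ (∀ x ∈ I, ∀ a : A, a * x ∈ I ∧ x * a ∈ I) ∧
    ∀ J : NonUnitalSubalgebra K A, s ⊆ (J : Set A) →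
      (∀ x ∈ J, ∀ a : A, a * x ∈ J ∧ x * a ∈ J) → I ≤ J

end AlgDefs

namespace Ultragraph

/-- Generators of the ultragraph Leavitt path algebra. -/
inductive LGen (G : Ultragraph) : Type
  | pr : {A : Set G.V // G.Mem0 A} → LGen G
  | ed : G.E → LGen G
  | st : G.E → LGen G

variable (K : Type) [Field K] (G : Ultragraph)

/-- The generator `p_A` in the free algebra. -/
noncomputable def genP (A : Set G.V) (h : G.Mem0 A) : FreeAlgebra K (LGen G) :=
  FreeAlgebra.ι K (LGen.pr ⟨A, h⟩)

/-- The generator `s_e` in the free algebra. -/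
noncomputable def genS (e : G.E) : FreeAlgebra K (LGen G) :=
  FreeAlgebra.ι K (LGen.ed e)

/-- The generator `s*_e` in the free algebra. -/
noncomputable def genT (e : G.E) : FreeAlgebra K (LGen G) :=
  FreeAlgebra.ι K (LGen.st e)

/-- The defining relations of the ultragraph Leavitt path algebra. -/
inductive LRel : FreeAlgebra K (LGen G) → FreeAlgebra K (LGen G) → Prop
  | pEmpty : LRel (genP K G ∅ Mem0.empty) 0
  | pMul {A B : Set G.V} (hA : G.Mem0 A) (hB : G.Mem0 B) :
      LRel (genP K G A hA * genP K G B hB) (genP K G (A ∩ B) (hA.inter hB))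
  | pUnion {A B : Set G.V} (hA : G.Mem0 A) (hB : G.Mem0 B) :
      LRel (genP K G (A ∪ B) (hA.union hB))
        (genP K G A hA + genP K G B hB - genP K G (A ∩ B) (hA.inter hB))
  | srcMul (e : G.E) :
      LRel (genP K G {G.src e} (Mem0.singleton _) * genS K G e) (genS K G e)
  | mulRng (e : G.E) :
      LRel (genS K G e * genP K G (G.rng e) (Mem0.range e)) (genS K G e)
  | rngStar (e : G.E) :
      LRel (genP K G (G.rng e) (Mem0.range e) * genT K G e) (genT K G e)
  | starSrc (e : G.E) :
      LRel (genT K G e * genP K G {G.src e} (Mem0.singleton _)) (genT K G e)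
  | starMulSame (e : G.E) :
      LRel (genT K G e * genS K G e) (genP K G (G.rng e) (Mem0.range e))
  | starMulDiff {e f : G.E} (h : e ≠ f) : LRel (genT K G e * genS K G f) 0
  | ck (v : G.V) (h : G.IsRegular v) :
      LRel (genP K G {v} (Mem0.singleton v))
        (∑ e ∈ h.2.toFinset, genS K G e * genT K G e)

/-- The unital envelope: the quotient of the free algebra by the relations. -/
abbrev LPAEnv := RingQuot (LRel K G)

/-- The quotient map. -/
noncomputable def lmk : FreeAlgebra K (LGen G) →ₐ[K] LPAEnv K G :=
  RingQuot.mkAlgHom K (LRel K G)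

/-- The Leavitt path algebra of the ultragraph `G`, as the non-unital
subalgebra of the unital envelope generated by the generators. -/
noncomputable def LPAsub : NonUnitalSubalgebra K (LPAEnv K G) :=
  NonUnitalAlgebra.adjoin K
    (Set.range fun g : LGen G => lmk K G (FreeAlgebra.ι K g))

/-- The Leavitt path algebra `L_K(𝒢)` (as a type). -/
abbrev LPA := ↥(LPAsub K G)

/-- The element `p_A` of `L_K(𝒢)`. -/
noncomputable def p (A : Set G.V) (h : G.Mem0 A) : LPA K G :=
  ⟨lmk K G (genP K G A h),
   NonUnitalAlgebra.subset_adjoin K ⟨LGen.pr ⟨A, h⟩, rfl⟩⟩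

/-- The element `s_e` of `L_K(𝒢)`. -/
noncomputable def se (e : G.E) : LPA K G :=
  ⟨lmk K G (genS K G e),
   NonUnitalAlgebra.subset_adjoin K ⟨LGen.ed e, rfl⟩⟩

/-- The element `s*_e` of `L_K(𝒢)`. -/
noncomputable def st (e : G.E) : LPA K G :=
  ⟨lmk K G (genT K G e),
   NonUnitalAlgebra.subset_adjoin K ⟨LGen.st e, rfl⟩⟩

/-- `s_α` for a path `α` ending at `v` (the empty path giving `p_{v}`). -/
noncomputable def spath (v : G.V) : List G.E → LPA K G
  | [] => p K G {v} (Mem0.singleton v)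
  | e :: l => se K G e * spath v l

/-- `s*_β` for a path `β` ending at `v`. -/
noncomputable def gpath (v : G.V) : List G.E → LPA K G
  | [] => p K G {v} (Mem0.singleton v)
  | e :: l => gpath v l * st K G e

/-- `s_c^n` for a cycle `c` based at `v`. -/
noncomputable def scn (v : G.V) (c : List G.E) : ℕ → LPA K G
  | 0 => p K G {v} (Mem0.singleton v)
  | n + 1 => spath K G v c * scn v c n

/-- `(s*_c)^n` for a cycle `c` based at `v`. -/
noncomputable def gcn (v : G.V) (c : List G.E) : ℕ → LPA K G
  | 0 => p K G {v} (Mem0.singleton v)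
  | n + 1 => gpath K G v c * gcn v c n

/-- `s_c^k` for `k : ℤ` (negative powers being powers of `s*_c`). -/
noncomputable def scz (v : G.V) (c : List G.E) : ℤ → LPA K G
  | Int.ofNat n => scn K G v c n
  | Int.negSucc n => gcn K G v c (n + 1)

end Ultragraph

section LaurentMatrices

variable (K : Type) [Field K] (Λ : Type)

/-- The `Λ×Λ` matrix over `K[x,x⁻¹]` with entry `r` at `(a,b)` and zero
elsewhere, realized as a `K`-linear endomorphism of `Λ →₀ K[x,x⁻¹]`. -/
noncomputable def matUnit (a b : Λ) (r : LaurentPolynomial K) :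
    Module.End K (Λ →₀ LaurentPolynomial K) :=
  (Finsupp.lsingle a).comp ((LinearMap.mulLeft K r).comp (Finsupp.lapply b))

/-- `M_Λ(K[x,x⁻¹])`: the non-unital `K`-algebra of `Λ×Λ` matrices over the
Laurent polynomial ring with finitely many nonzero entries. -/
noncomputable def FinMatLaurent :
    NonUnitalSubalgebra K (Module.End K (Λ →₀ LaurentPolynomial K)) :=
  NonUnitalAlgebra.adjoin K
    (Set.range fun t : Λ × Λ × LaurentPolynomial K => matUnit K Λ t.1 t.2.1 t.2.2)

end LaurentMatrices

namespace Ultragraph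

variable {G : Ultragraph} {H : Set (Set G.V)}

lemma s8_mem_hchain_succ {B : Set G.V} {n : ℕ} :
    B ∈ G.hchain H (n + 1) ↔ ∃ A ∈ G.hchain H n, ∃ F : Finset G.V,
      (F : Set G.V) ⊆ G.Sset (G.hchain H n) ∧ B = A ∪ (F : Set G.V) := Iff.rfl

lemma s8_hchain_mono_succ (n : ℕ) : G.hchain H n ⊆ G.hchain H (n + 1) :=
  fun A hA => s8_mem_hchain_succ.mpr ⟨A, hA, ∅, by simp, by simp⟩

lemma s8_hchain_mono {m n : ℕ} (h : m ≤ n) : G.hchain H m ⊆ G.hchain H n := by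
  induction h with
  | refl => exact fun _ h => h
  | step _ ih => exact fun A hA => s8_hchain_mono_succ _ (ih hA)

lemma s8_Sset_mono {X Y : Set (Set G.V)} (h : X ⊆ Y) : G.Sset X ⊆ G.Sset Y :=
  fun w hw => ⟨hw.1, fun e he => h (hw.2 e he)⟩

lemma s8_mem0_finset (F : Finset G.V) : G.Mem0 (F : Set G.V) := by
  classical
  induction F using Finset.induction with
  | empty => simpa using Mem0.empty
  | @insert w F hw ih =>
    rw [Finset.coe_insert, Set.insert_eq]
    exact (Mem0.singleton w).union ih

lemma s8_hchain_mem0 (hH : G.Hereditary H) :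
    ∀ n, ∀ A ∈ G.hchain H n, G.Mem0 A := by
  intro n
  induction n with
  | zero => exact hH.1
  | succ n ih =>
    rintro X ⟨A, hA, F, hF, rfl⟩
    exact (ih A hA).union (s8_mem0_finset F)

lemma s8_hchain_union (hH : G.Hereditary H) :
    ∀ n, ∀ A ∈ G.hchain H n, ∀ B ∈ G.hchain H n, A ∪ B ∈ G.hchain H n := by
  classical
  intro n
  induction n with
  | zero => exact hH.2.2.1
  | succ n ih =>
    rintro X ⟨A, hA, F, hF, rfl⟩ Y ⟨B, hB, F', hF', rfl⟩
    refine s8_mem_hchain_succ.mpr ⟨A ∪ B, ih A hA B hB, F ∪ F', ?_, ?_⟩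
    · rw [Finset.coe_union]
      exact Set.union_subset hF hF'
    · rw [Finset.coe_union, Set.union_union_union_comm]

lemma s8_hchain_subset_closed (hH : G.Hereditary H) :
    ∀ n, ∀ A ∈ G.hchain H n, ∀ B : Set G.V, G.Mem0 B → B ⊆ A → B ∈ G.hchain H n := by
  intro n
  induction n with
  | zero => exact hH.2.2.2
  | succ n ih =>
    rintro X ⟨A, hA, F, hF, rfl⟩ B hB hBsub
    classical
    have hA0 : G.Mem0 A := s8_hchain_mem0 hH n A hA
    have hBA : B ∩ A ∈ G.hchain H n := ih A hA (B ∩ A) (hB.inter hA0) Set.inter_subset_right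
    have hfin : (B ∩ (F : Set G.V)).Finite := F.finite_toSet.inter_of_right B
    refine s8_mem_hchain_succ.mpr ⟨B ∩ A, hBA, hfin.toFinset, ?_, ?_⟩
    · rw [Set.Finite.coe_toFinset]
      exact fun x hx => hF hx.2
    · rw [Set.Finite.coe_toFinset, ← Set.inter_union_distrib_left,
        Set.inter_eq_self_of_subset_left hBsub]

lemma s8_hchain_edge (hH : G.Hereditary H) :
    ∀ n, ∀ e : G.E, {G.src e} ∈ G.hchain H n → G.rng e ∈ G.hchain H n := by
  intro n
  induction n with
  | zero => exact fun e => hH.2.1 e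
  | succ n ih =>
    rintro e h
    obtain ⟨A, hA, F, hF, hEq⟩ := s8_mem_hchain_succ.mp h
    have hmem : G.src e ∈ A ∪ (F : Set G.V) := by rw [← hEq]; exact rfl
    rcases hmem with hmA | hmF
    · have hAeq : A = {G.src e} := by
        apply Set.Subset.antisymm
        · intro x hx
          have : x ∈ A ∪ (F : Set G.V) := Or.inl hx
          rw [← hEq] at this; exact this
        · intro x hx; rw [Set.mem_singleton_iff] at hx; subst hx; exact hmA
      exact s8_hchain_mono_succ n (ih e (hAeq ▸ hA))
    · have hS : G.src e ∈ G.Sset (G.hchain H n) := hF hmF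
      exact s8_hchain_mono_succ n (hS.2 e rfl)

lemma s8_hchain_ne : ∀ n, (G.hchain H n).Nonempty → H.Nonempty := by
  intro n
  induction n with
  | zero => exact fun h => h
  | succ n ih =>
    rintro ⟨X, A, hA, _⟩
    exact ih ⟨A, hA⟩

lemma s8_union_finset_mem {H' : Set (Set G.V)} (hher : G.Hereditary H')
    (hsat : G.Saturated H') {X : Set (Set G.V)} (hX : X ⊆ H') :
    ∀ F : Finset G.V, (F : Set G.V) ⊆ G.Sset X → ∀ A ∈ H', A ∪ (F : Set G.V) ∈ H' := by
  classical
  intro F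
  induction F using Finset.induction with
  | empty => intro _ A hA; simpa using hA
  | @insert w F hw ih =>
    intro hF A hA
    have hwS : w ∈ G.Sset X := hF (by simp)
    have hsing : {w} ∈ H' := hsat w hwS.1 fun e he => hX (hwS.2 e he)
    have hF' : (F : Set G.V) ⊆ G.Sset X := fun x hx => hF (by simp [hx])
    have h2 := ih hF' (A ∪ {w}) (hher.2.2.1 A hA {w} hsing)
    rw [Finset.coe_insert, Set.insert_eq, ← Set.union_assoc]
    exact h2

lemma s8_hchain_le {H' : Set (Set G.V)} (hher : G.Hereditary H')
    (hsat : G.Saturated H') (hHH' : H ⊆ H') :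
    ∀ n, G.hchain H n ⊆ H' := by
  intro n
  induction n with
  | zero => exact hHH'
  | succ n ih =>
    rintro X ⟨A, hA, F, hF, rfl⟩
    exact s8_union_finset_mem hher hsat ih F hF A (ih hA)

lemma s8_hchain_decomp :
    ∀ n, ∀ X ∈ G.hchain H n, ∃ A ∈ H, ∃ F : Finset G.V,
      (F : Set G.V) ⊆ (⋃ m : ℕ, G.Sset (G.hchain H (m + 1))) ∧
      X = A ∪ (F : Set G.V) := by
  classical
  intro n
  induction n with
  | zero => exact fun X hX => ⟨X, hX, ∅, by simp, by simp⟩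
  | succ n ih =>
    rintro X ⟨A', hA', F', hF', rfl⟩
    obtain ⟨A, hA, F, hF, rfl⟩ := ih A' hA'
    refine ⟨A, hA, F ∪ F', ?_, ?_⟩
    · rw [Finset.coe_union]
      refine Set.union_subset hF fun x hx => Set.mem_iUnion.mpr ⟨n, ?_⟩
      exact s8_Sset_mono (s8_hchain_mono_succ n) (hF' hx)
    · rw [Finset.coe_union, Set.union_assoc]

end Ultragraph

/-- description of the saturated hereditary closure. -/
theorem statement8 (G : Ultragraph) (H : Set (Set G.V)) (hH : G.Hereditary H) :
    (G.satHerClosure H = ⋃ n : ℕ, G.hchain H n) ∧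
    ∀ X ∈ G.satHerClosure H, ∃ A ∈ H, ∃ F : Finset G.V,
      (F : Set G.V) ⊆ (⋃ n : ℕ, G.Sset (G.hchain H (n + 1))) ∧
      X = A ∪ (F : Set G.V) := by
  classical
  have hher : G.Hereditary (⋃ n : ℕ, G.hchain H n) := by
    refine ⟨?_, ?_, ?_, ?_⟩
    · rintro A hA
      obtain ⟨n, hn⟩ := Set.mem_iUnion.mp hA
      exact Ultragraph.s8_hchain_mem0 hH n A hn
    · rintro e he
      obtain ⟨n, hn⟩ := Set.mem_iUnion.mp he
      exact Set.mem_iUnion.mpr ⟨n, Ultragraph.s8_hchain_edge hH n e hn⟩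
    · rintro A hA B hB
      obtain ⟨n, hn⟩ := Set.mem_iUnion.mp hA
      obtain ⟨m, hm⟩ := Set.mem_iUnion.mp hB
      exact Set.mem_iUnion.mpr ⟨max n m, Ultragraph.s8_hchain_union hH _ A
        (Ultragraph.s8_hchain_mono (le_max_left n m) hn) B
        (Ultragraph.s8_hchain_mono (le_max_right n m) hm)⟩
    · rintro A hA B hB hBA
      obtain ⟨n, hn⟩ := Set.mem_iUnion.mp hA
      exact Set.mem_iUnion.mpr ⟨n, Ultragraph.s8_hchain_subset_closed hH n A hn B hB hBA⟩
  have hsat : G.Saturated (⋃ n : ℕ, G.hchain H n) := by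
    intro v hv hall
    choose nn hnn using fun e (he : G.src e = v) => Set.mem_iUnion.mp (hall e he)
    obtain ⟨e₀, he₀⟩ := hv.1
    set N := hv.2.toFinset.sup (fun e => if h : G.src e = v then nn e h else 0) with hN
    have hmemN : ∀ e, G.src e = v → G.rng e ∈ G.hchain H N := by
      intro e he
      have hle : (if h : G.src e = v then nn e h else 0) ≤ N :=
        Finset.le_sup (f := fun e => if h : G.src e = v then nn e h else 0)
          (hv.2.mem_toFinset.mpr he)
      rw [dif_pos he] at hle
      exact Ultragraph.s8_hchain_mono hle (hnn e he)
    have hne : H.Nonempty := Ultragraph.s8_hchain_ne N ⟨G.rng e₀, hmemN e₀ he₀⟩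
    obtain ⟨A₀, hA₀⟩ := hne
    have hemp : ∅ ∈ G.hchain H N :=
      Ultragraph.s8_hchain_mono (Nat.zero_le N)
        (hH.2.2.2 A₀ hA₀ ∅ Ultragraph.Mem0.empty (Set.empty_subset _))
    refine Set.mem_iUnion.mpr ⟨N + 1,
      Ultragraph.s8_mem_hchain_succ.mpr ⟨∅, hemp, {v}, ?_, by simp⟩⟩
    rw [Finset.coe_singleton]
    rintro x hx
    rw [Set.mem_singleton_iff] at hx; subst hx
    exact ⟨hv, hmemN⟩
  have heq : G.satHerClosure H = ⋃ n : ℕ, G.hchain H n := by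
    apply Set.Subset.antisymm
    · exact Set.sInter_subset_of_mem ⟨hher, hsat, fun A hA => Set.mem_iUnion.mpr ⟨0, hA⟩⟩
    · refine Set.iUnion_subset fun n X hX => Set.mem_sInter.mpr fun H' hH' =>
        Ultragraph.s8_hchain_le hH'.1 hH'.2.1 hH'.2.2 n hX
  refine ⟨heq, ?_⟩
  intro X hX
  rw [heq] at hX
  obtain ⟨n, hn⟩ := Set.mem_iUnion.mp hX
  exact Ultragraph.s8_hchain_decomp n X hn
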